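/- For every k ≥ 2: p_k(a) = 0 for every a ∈ A_{<k}, and p_k(a) = 1 for every a ∈ A_{<k+1} \ A_{<k} (i.e. for every element of A of degree exactly k). In particular e_k(w) divides p_k(w) in K[w] and p_k(t_k) = 1. -/

import Mathlib

/-!
Write `τ` for the Frobenius `c ↦ c²` and consider the twisted power series
`e = ∑ aⱼ τʲ` and `l = ∑ bⱼ τʲ` over `K`. The recursions defining `aⱼ` and `bⱼ` say exactly
that `e x = φₓ e` and `x l = l φₓ`, where `φₓ = x + [1]ₓ τ + τ²`. A series commuting with `x`,
or with `φₓ`, is determined by its constant term because `x^(2ⁿ) ≠ x`; hence `l e = 1 = e l`,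
and `φ : a ↦ e a l` is multiplicative. The same uniqueness identifies
`φ_y = y + r τ + x r τ² + τ³`, `r = x³ + x + 1`, so `φ` sends `xⁱyʲ` to a monic twisted
polynomial of degree `2i + 3j`. Now `p_k(a)` is the coefficient of `τᵏ` in `φₐ` and is additive
in `a`: it vanishes on `A_{<k}` and equals `1` at `t_k`, hence on all of `A_{<k+1} \ A_{<k}`.
The roots of `e_k` are distinct, which gives the divisibility.
-/

noncomputable section

open Polynomial
open scoped Classical

/-- The defining polynomial `Y² + Y + (X³ + X + 1)` over `𝔽₂[X]`,
viewed as a polynomial in `Y` with coefficients in `𝔽₂[X]`. -/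
def curveEq : Polynomial (Polynomial (ZMod 2)) :=
  X ^ 2 + X + C (X ^ 3 + X + 1)

/-- The ring `A = 𝔽₂[X,Y]/(Y² + Y + X³ + X + 1)`. -/
abbrev A : Type := AdjoinRoot curveEq

/-- The image `x` of `X` in `A`. -/
def aX : A := AdjoinRoot.of curveEq (X : Polynomial (ZMod 2))

/-- The image `y` of `Y` in `A`. -/
def aY : A := AdjoinRoot.root curveEq

/-- The bracket `[j]_x = x^{2^j} + x ∈ A`. -/
def brX (j : ℕ) : A := aX ^ 2 ^ j + aX

/-- The monomials `xⁱyʲ` with `j ∈ {0,1}` and `2i + 3j < k`. -/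
def monoSet (k : ℕ) : Finset A :=
  ((Finset.range k ×ˢ Finset.range 2).filter fun p => 2 * p.1 + 3 * p.2 < k).image
    fun p => aX ^ p.1 * aY ^ p.2

/-- `A_{<k}` : the `𝔽₂`-linear span of the monomials `xⁱyʲ` with `j ∈ {0,1}`
and `2i + 3j < k`, realized as the finite set of all subset sums. -/
def Alt (k : ℕ) : Finset A := (monoSet k).powerset.image fun s => s.sum id

/-- `t_k := x^{k/2}` if `k` is even, `t_k := y·x^{(k-3)/2}` if `k` is odd. -/
def tk (k : ℕ) : A := if Even k then aX ^ (k / 2) else aY * aX ^ ((k - 3) / 2)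

/-- `e_k(w) := ∏_{a ∈ A_{<k}} (w + a) ∈ A[w]`. -/
def ePoly (k : ℕ) : Polynomial A := ∏ a ∈ Alt k, (X + C a)

/-- `D_k := e_k(t_k)`, the product of all monic elements of `A` of degree `k`. -/
def Dk (k : ℕ) : A := (ePoly k).eval (tk k)

variable (K : Type) [Field K] [Algebra A K]

/-- The coefficients `a_j = 1/d_j` of the exponential function:
`a₀ = a₁ = 1` and `a_j = ([1]_x·a_{j-1}² + a_{j-2}⁴)/[j]_x` for `j ≥ 2`. -/
def aSeq : ℕ → K
  | 0 => 1
  | 1 => 1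
  | (j + 2) =>
      (algebraMap A K (brX 1) * (aSeq (j + 1)) ^ 2 + (aSeq j) ^ 4) /
        algebraMap A K (brX (j + 2))

/-- The coefficients `b_j = 1/ℓ_j` of the logarithm function:
`b₀ = b₁ = 1` and `b_j = ([1]_x^{2^{j-1}}·b_{j-1} + b_{j-2})/[j]_x` for `j ≥ 2`. -/
def bSeq : ℕ → K
  | 0 => 1
  | 1 => 1
  | (j + 2) =>
      (algebraMap A K (brX 1) ^ 2 ^ (j + 1) * bSeq (j + 1) + bSeq j) /
        algebraMap A K (brX (j + 2))

/-- `p_k(w) := Σ_{j=0}^{k} a_j·b_{k-j}^{2^j}·w^{2^j} ∈ K[w]`. -/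
def pPoly (k : ℕ) : Polynomial K :=
  ∑ j ∈ Finset.range (k + 1), C (aSeq K j * (bSeq K (k - j)) ^ 2 ^ j) * X ^ 2 ^ j

/-- `S_{n,r}(x₁,…,x_n) := Σ_{n ≥ i₁ > i₂ > … > i_r ≥ 1} ∏_{j=1}^{r}
x_{i_j}^{2^{n-j+1-i_j}}`, with `S_{n,0} = 1` and `S_{n,r} = 0` for `r > n`. -/
def Ssum (R : Type*) [CommRing R] (n r : ℕ) (x : ℕ → R) : R :=
  ∑ f ∈ Finset.univ.filter
      (fun f : Fin r → Fin (n + 1) => StrictAnti f ∧ ∀ j, 1 ≤ (f j : ℕ)),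
    ∏ j : Fin r, x (f j) ^ 2 ^ (n - (j : ℕ) - (f j : ℕ))


/-- Twisted power series `∑ fₙ τⁿ` over `R`, multiplied by the rule `τ c = c ^ p τ`. -/
def TwistedSeries (R : Type*) (_p : ℕ) : Type _ := ℕ → R

namespace TwistedSeries

variable {R : Type*} [CommRing R] {p : ℕ}

instance : Mul (TwistedSeries R p) :=
  ⟨fun f g n => ∑ i ∈ Finset.range (n + 1), f i * g (n - i) ^ p ^ i⟩

theorem mul_apply (f g : TwistedSeries R p) (n : ℕ) :
    (f * g) n = ∑ i ∈ Finset.range (n + 1), f i * g (n - i) ^ p ^ i :=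
  rfl

theorem mul_apply_zero (f g : TwistedSeries R p) : (f * g) 0 = f 0 * g 0 := by
  simp [mul_apply]

def const (c : R) : TwistedSeries R p := fun n => if n = 0 then c else 0

instance : One (TwistedSeries R p) := ⟨const 1⟩

theorem const_apply (c : R) (n : ℕ) :
    (const c : TwistedSeries R p) n = if n = 0 then c else 0 :=
  rfl

theorem one_def : (1 : TwistedSeries R p) = const 1 :=
  rfl

theorem one_apply (n : ℕ) : (1 : TwistedSeries R p) n = if n = 0 then 1 else 0 :=
  rfl

theorem const_mul_apply (c : R) (f : TwistedSeries R p) (n : ℕ) :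
    (const c * f : TwistedSeries R p) n = c * f n := by
  rw [mul_apply, Finset.sum_eq_single 0] <;> simp +contextual [const_apply]

theorem mul_const_apply [NeZero p] (f : TwistedSeries R p) (c : R) (n : ℕ) :
    (f * const c : TwistedSeries R p) n = f n * c ^ p ^ n := by
  rw [mul_apply, Finset.sum_eq_single n]
  · simp [const_apply]
  · intro i hi hin
    have : n - i ≠ 0 := by rw [Finset.mem_range] at hi; omega
    rw [const_apply, if_neg this, zero_pow (pow_ne_zero _ (NeZero.ne p)), mul_zero]
  · simp

theorem const_mul_const (c d : R) :
    (const c * const d : TwistedSeries R p) = const (c * d) := by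
  funext n
  rw [const_mul_apply, const_apply, const_apply, mul_ite, mul_zero]

protected theorem mul_assoc [Fact p.Prime] [CharP R p] (f g h : TwistedSeries R p) :
    f * g * h = f * (g * h) := by
  -- both sides are `∑_{i + j + l = n} fᵢ gⱼ^(pⁱ) hₗ^(p^(i+j))` since `c ↦ c ^ pⁱ` is additive
  funext n
  simp only [mul_apply, Finset.sum_mul, Finset.mul_sum, sum_pow_char_pow, mul_pow, ← pow_mul,
    ← pow_add]
  rw [Finset.sum_sigma', Finset.sum_sigma']
  refine Finset.sum_nbij' (fun x => ⟨x.2, x.1 - x.2⟩) (fun x => ⟨x.1 + x.2, x.1⟩)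
    ?_ ?_ ?_ ?_ ?_ <;> simp only [Finset.mem_sigma, Finset.mem_range, Sigma.forall] <;>
    intro a b hab
  · omega
  · omega
  · rw [show b + (a - b) = a by omega]
  · rw [Nat.add_sub_cancel_left]
  · rw [show n - b - (a - b) = n - a by omega, Nat.sub_add_cancel (by omega : b ≤ a),
      _root_.mul_assoc]

instance [Fact p.Prime] [CharP R p] : Monoid (TwistedSeries R p) where
  mul_assoc := TwistedSeries.mul_assoc
  one_mul f := funext fun n => (const_mul_apply 1 f n).trans (one_mul _)
  mul_one f := funext fun n => (mul_const_apply f 1 n).trans (by rw [one_pow, mul_one])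

/-- Comparing the coefficients of `τⁿ` in `u φ = φ u` determines `uₙ` from the `uᵢ`, `i < n`,
since `uₙ` enters as `uₙ (φ₀ ^ pⁿ - φ₀)`. -/
theorem eq_of_commute [IsDomain R] {φ f g : TwistedSeries R p}
    (hφ : ∀ n ≠ 0, φ 0 ^ p ^ n ≠ φ 0) (hf : f * φ = φ * f) (hg : g * φ = φ * g)
    (h0 : f 0 = g 0) : f = g := by
  funext n
  induction n using Nat.strong_induction_on with
  | _ n ih =>
  rcases Nat.eq_zero_or_pos n with rfl | hn
  · exact h0
  have hsplit (u : TwistedSeries R p) :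
      (u * φ) n = u n * φ 0 ^ p ^ n + ∑ i ∈ Finset.range n, u i * φ (n - i) ^ p ^ i ∧
      (φ * u) n = φ 0 * u n + ∑ i ∈ Finset.range n, φ (i + 1) * u (n - (i + 1)) ^ p ^ (i + 1) := by
    rw [mul_apply, mul_apply, Finset.sum_range_succ, Finset.sum_range_succ']
    simp only [Nat.sub_self, Nat.sub_zero, pow_zero, pow_one]
    constructor <;> ring
  have hlow : ∑ i ∈ Finset.range n, f i * φ (n - i) ^ p ^ i =
      ∑ i ∈ Finset.range n, g i * φ (n - i) ^ p ^ i :=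
    Finset.sum_congr rfl fun i hi => by rw [ih i (Finset.mem_range.1 hi)]
  have hlow' : ∑ i ∈ Finset.range n, φ (i + 1) * f (n - (i + 1)) ^ p ^ (i + 1) =
      ∑ i ∈ Finset.range n, φ (i + 1) * g (n - (i + 1)) ^ p ^ (i + 1) :=
    Finset.sum_congr rfl fun i _ => by rw [ih _ (by omega)]
  have hfn := congrFun hf n
  have hgn := congrFun hg n
  rw [(hsplit f).1, (hsplit f).2, hlow, hlow'] at hfn
  rw [(hsplit g).1, (hsplit g).2] at hgn
  have hcancel : (f n - g n) * (φ 0 ^ p ^ n - φ 0) = 0 := by linear_combination hfn - hgn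
  exact sub_eq_zero.1 ((mul_eq_zero.1 hcancel).resolve_right (sub_ne_zero.2 (hφ n hn.ne')))

theorem mul_apply_add_of_left {f : TwistedSeries R p} {d : ℕ} (hf : ∀ m, d < m → f m = 0)
    (g : TwistedSeries R p) (n : ℕ) :
    (f * g) (n + d) = ∑ i ∈ Finset.range (d + 1), f i * g (n + d - i) ^ p ^ i := by
  refine (Finset.sum_subset (Finset.range_subset_range.2 (by omega)) fun i _ hi => ?_).symm
  rw [hf i (by rw [Finset.mem_range] at hi; omega), zero_mul]

theorem mul_apply_add_of_right [NeZero p] {g : TwistedSeries R p} {d : ℕ}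
    (hg : ∀ m, d < m → g m = 0) (f : TwistedSeries R p) (n : ℕ) :
    (f * g) (n + d) = ∑ i ∈ Finset.range (d + 1), f (n + i) * g (d - i) ^ p ^ (n + i) := by
  rw [mul_apply, show n + d + 1 = n + (d + 1) by ring, Finset.sum_range_add, Finset.sum_eq_zero,
    zero_add]
  · simp only [Nat.add_sub_add_left]
  · intro i hi
    rw [hg _ (by rw [Finset.mem_range] at hi; omega), zero_pow (pow_ne_zero _ (NeZero.ne p)),
      mul_zero]

structure IsMonicOfDegree (f : TwistedSeries R p) (d : ℕ) : Prop where
  coeff_eq_one : f d = 1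
  coeff_eq_zero : ∀ n, d < n → f n = 0

theorem isMonicOfDegree_one : (1 : TwistedSeries R p).IsMonicOfDegree 0 :=
  ⟨rfl, fun _ hn => if_neg hn.ne'⟩

theorem IsMonicOfDegree.mul [NeZero p] {f g : TwistedSeries R p} {d e : ℕ}
    (hf : f.IsMonicOfDegree d) (hg : g.IsMonicOfDegree e) : (f * g).IsMonicOfDegree (d + e) where
  coeff_eq_one := by
    rw [mul_apply, Finset.sum_eq_single d]
    · rw [Nat.add_sub_cancel_left, hf.coeff_eq_one, hg.coeff_eq_one, one_pow, one_mul]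
    · intro i hi hid
      rcases lt_or_gt_of_ne hid with h | h
      · rw [hg.coeff_eq_zero _ (by omega), zero_pow (pow_ne_zero _ (NeZero.ne p)), mul_zero]
      · rw [hf.coeff_eq_zero _ h, zero_mul]
    · simp
  coeff_eq_zero n hn := by
    refine Finset.sum_eq_zero fun i _ => ?_
    rcases le_or_gt i d with h | h
    · rw [hg.coeff_eq_zero _ (by omega), zero_pow (pow_ne_zero _ (NeZero.ne p)), mul_zero]
    · rw [hf.coeff_eq_zero _ h, zero_mul]

theorem IsMonicOfDegree.pow [Fact p.Prime] [CharP R p] {f : TwistedSeries R p} {d : ℕ}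
    (hf : f.IsMonicOfDegree d) (n : ℕ) : (f ^ n).IsMonicOfDegree (n * d) := by
  induction n with
  | zero => simpa using isMonicOfDegree_one
  | succ n ih => simpa [pow_succ, add_mul] using ih.mul hf

def ofList (l : List R) : TwistedSeries R p := fun n => l.getD n 0

@[simp]
theorem ofList_apply (l : List R) (n : ℕ) : (ofList l : TwistedSeries R p) n = l.getD n 0 :=
  rfl

theorem isMonicOfDegree_ofList_append_one (l : List R) :
    (ofList (l ++ [1]) : TwistedSeries R p).IsMonicOfDegree l.length where
  coeff_eq_one := by simp [ofList]
  coeff_eq_zero n hn :=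
    List.getD_eq_default _ _ (by rw [List.length_append, List.length_singleton]; omega)

end TwistedSeries

open TwistedSeries

theorem degree_curveEq : curveEq.degree = 2 := by
  unfold curveEq
  compute_degree!

theorem injective_of_curveEq : Function.Injective (AdjoinRoot.of curveEq) :=
  AdjoinRoot.of.injective_of_degree_ne_zero (by rw [degree_curveEq]; decide)

instance : CharP A 2 := charP_of_injective_ringHom injective_of_curveEq 2

theorem aY_sq_add_aY : aY ^ 2 + aY + (aX ^ 3 + aX + 1) = 0 := by
  have h : (X ^ 2 + X + C (X ^ 3 + X + 1)).eval₂ (AdjoinRoot.of curveEq) aY = 0 :=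
    AdjoinRoot.eval₂_root curveEq
  rw [eval₂_add, eval₂_add, eval₂_X_pow, eval₂_X, eval₂_C] at h
  simpa [aX] using h

theorem aX_pow_two_pow_sub_aX_ne_zero {n : ℕ} (hn : n ≠ 0) : aX ^ 2 ^ n - aX ≠ 0 := by
  have h := FiniteField.X_pow_card_pow_sub_X_ne_zero (ZMod 2) hn one_lt_two
  rw [← map_ne_zero_iff _ injective_of_curveEq, map_sub, map_pow] at h
  exact h

theorem tk_eq_monomial {k i j : ℕ} (hj : j < 2) (h : 2 * i + 3 * j = k) :
    tk k = aX ^ i * aY ^ j := by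
  interval_cases j
  · rw [tk, if_pos ⟨i, by omega⟩, show k / 2 = i by omega, pow_zero, mul_one]
  · rw [tk, if_neg (Nat.not_even_iff_odd.2 ⟨i + 1, by omega⟩), show (k - 3) / 2 = i by omega,
      pow_one, mul_comm]

theorem subset_monoSet_of_subset_monoSet_succ {k : ℕ} {s : Finset A}
    (hs : s ⊆ monoSet (k + 1)) (hk : tk k ∉ s) : s ⊆ monoSet k := by
  intro m hm
  have hm' := hs hm
  simp only [monoSet, Finset.mem_image, Finset.mem_filter, Finset.mem_product,
    Finset.mem_range] at hm' ⊢
  obtain ⟨⟨i, j⟩, ⟨⟨-, hj⟩, hdeg⟩, rfl⟩ := hm'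
  have hne : 2 * i + 3 * j ≠ k := fun h => hk (tk_eq_monomial hj h ▸ hm)
  exact ⟨(i, j), ⟨⟨by omega, hj⟩, by omega⟩, rfl⟩

section DrinfeldModule

local notation "ι" => algebraMap A K

def phiX : TwistedSeries K 2 := ofList [ι aX, ι (brX 1), 1]

def phiY : TwistedSeries K 2 :=
  ofList [ι aY, ι (aX ^ 3 + aX + 1), ι (aX * (aX ^ 3 + aX + 1)), 1]

def expSeries : TwistedSeries K 2 := aSeq K

def logSeries : TwistedSeries K 2 := bSeq K

@[simp]
theorem expSeries_apply (n : ℕ) : expSeries K n = aSeq K n :=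
  rfl

@[simp]
theorem logSeries_apply (n : ℕ) : logSeries K n = bSeq K n :=
  rfl

theorem isMonicOfDegree_phiX : (phiX K).IsMonicOfDegree 2 :=
  isMonicOfDegree_ofList_append_one [_, _]

theorem isMonicOfDegree_phiY : (phiY K).IsMonicOfDegree 3 :=
  isMonicOfDegree_ofList_append_one [_, _, _]

theorem algebraMap_brX (n : ℕ) : ι (brX n) = ι aX ^ 2 ^ n + ι aX := by
  rw [brX, map_add, map_pow]

variable [IsFractionRing A K]

instance : CharP K 2 := charP_of_injective_algebraMap (IsFractionRing.injective A K) 2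

theorem algebraMap_aX_pow_two_pow_ne {n : ℕ} (hn : n ≠ 0) : ι aX ^ 2 ^ n ≠ ι aX := by
  rw [← map_pow, Ne, (IsFractionRing.injective A K).eq_iff, ← sub_eq_zero]
  exact aX_pow_two_pow_sub_aX_ne_zero hn

theorem algebraMap_brX_ne_zero {n : ℕ} (hn : n ≠ 0) : ι (brX n) ≠ 0 := by
  rw [algebraMap_brX, Ne, CharTwo.add_eq_zero]
  exact algebraMap_aX_pow_two_pow_ne K hn

theorem aSeq_add_two_mul (j : ℕ) :
    aSeq K (j + 2) * ι (brX (j + 2)) = ι (brX 1) * aSeq K (j + 1) ^ 2 + aSeq K j ^ 4 :=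
  div_mul_cancel₀ _ (algebraMap_brX_ne_zero K (by omega))

theorem bSeq_add_two_mul (j : ℕ) :
    bSeq K (j + 2) * ι (brX (j + 2)) = ι (brX 1) ^ 2 ^ (j + 1) * bSeq K (j + 1) + bSeq K j :=
  div_mul_cancel₀ _ (algebraMap_brX_ne_zero K (by omega))

theorem expSeries_mul_const : expSeries K * const (ι aX) = phiX K * expSeries K := by
  funext n
  rw [mul_const_apply]
  match n with
  | 0 => simp [mul_apply_zero, phiX, aSeq, mul_comm]
  | 1 =>
    simp only [mul_apply, Finset.sum_range_succ, Finset.sum_range_zero, zero_add, phiX,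
      ofList_apply, List.getD_cons_zero, List.getD_cons_succ, Nat.reduceSub, expSeries_apply,
      aSeq, algebraMap_brX]
    grind
  | n + 2 =>
    have h := aSeq_add_two_mul K n
    rw [algebraMap_brX, algebraMap_brX] at h
    rw [mul_apply_add_of_left (isMonicOfDegree_phiX K).coeff_eq_zero]
    simp only [Finset.sum_range_succ, Finset.sum_range_zero, zero_add, phiX, ofList_apply,
      List.getD_cons_zero, List.getD_cons_succ, expSeries_apply, algebraMap_brX]
    grind

theorem const_mul_logSeries : const (ι aX) * logSeries K = logSeries K * phiX K := by
  funext n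
  rw [const_mul_apply]
  match n with
  | 0 => simp [mul_apply_zero, phiX, bSeq]
  | 1 =>
    simp only [mul_apply, Finset.sum_range_succ, Finset.sum_range_zero, zero_add, phiX,
      ofList_apply, List.getD_cons_zero, List.getD_cons_succ, Nat.reduceSub, logSeries_apply,
      bSeq, algebraMap_brX]
    grind
  | n + 2 =>
    have h := bSeq_add_two_mul K n
    rw [algebraMap_brX, algebraMap_brX] at h
    rw [mul_apply_add_of_right (isMonicOfDegree_phiX K).coeff_eq_zero]
    simp only [Finset.sum_range_succ, Finset.sum_range_zero, zero_add, phiX, ofList_apply,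
      List.getD_cons_zero, List.getD_cons_succ, Nat.reduceSub, logSeries_apply, algebraMap_brX,
      one_pow]
    grind

theorem logSeries_mul_expSeries : logSeries K * expSeries K = 1 := by
  refine eq_of_commute (φ := const (ι aX)) (fun n hn => algebraMap_aX_pow_two_pow_ne K hn)
    ?_ (by rw [one_mul, mul_one]) (by simp [mul_apply_zero, aSeq, bSeq, one_apply])
  rw [mul_assoc, expSeries_mul_const, ← mul_assoc, ← const_mul_logSeries, mul_assoc]

theorem expSeries_mul_logSeries : expSeries K * logSeries K = 1 := by
  refine eq_of_commute (φ := phiX K) (fun n hn => algebraMap_aX_pow_two_pow_ne K hn)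
    ?_ (by rw [one_mul, mul_one]) (by simp [mul_apply_zero, aSeq, bSeq, one_apply])
  rw [mul_assoc, ← const_mul_logSeries, ← mul_assoc, expSeries_mul_const, mul_assoc]

def drinfeld : A →* TwistedSeries K 2 where
  toFun a := expSeries K * const (ι a) * logSeries K
  map_one' := by
    change expSeries K * const (ι 1) * logSeries K = 1
    rw [map_one, ← one_def, mul_one, expSeries_mul_logSeries]
  map_mul' a b := by
    rw [map_mul, ← const_mul_const]
    simp only [mul_assoc]
    rw [← mul_assoc (logSeries K), logSeries_mul_expSeries, one_mul]

theorem drinfeld_apply (a : A) : drinfeld K a = expSeries K * const (ι a) * logSeries K :=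
  rfl

theorem drinfeld_apply_zero (a : A) : drinfeld K a 0 = ι a := by
  simp [drinfeld_apply, mul_apply_zero, const_apply, aSeq, bSeq]

theorem drinfeld_aX : drinfeld K aX = phiX K := by
  rw [drinfeld_apply, expSeries_mul_const, mul_assoc, expSeries_mul_logSeries, mul_one]

theorem phiY_mul_phiX : phiY K * phiX K = phiX K * phiY K := by
  have hrel := congrArg ι aY_sq_add_aY
  simp only [map_add, map_pow, map_one, map_zero] at hrel
  funext n
  rcases le_or_gt n 5 with hn | hn
  · interval_cases n <;>
      simp only [mul_apply, Finset.sum_range_succ, Finset.sum_range_zero, zero_add, phiX, phiY,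
        ofList_apply, List.getD_cons_zero, List.getD_cons_succ, List.getD_nil, Nat.reduceSub,
        Nat.reduceAdd, algebraMap_brX, map_add, map_mul, map_pow, map_one] <;>
      grind
  · rw [((isMonicOfDegree_phiY K).mul (isMonicOfDegree_phiX K)).coeff_eq_zero n hn,
      ((isMonicOfDegree_phiX K).mul (isMonicOfDegree_phiY K)).coeff_eq_zero n hn]

theorem drinfeld_aY : drinfeld K aY = phiY K := by
  refine eq_of_commute (φ := phiX K) (fun n hn => algebraMap_aX_pow_two_pow_ne K hn)
    ?_ (phiY_mul_phiX K) (drinfeld_apply_zero K aY)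
  rw [← drinfeld_aX, ← map_mul, ← map_mul, mul_comm]

theorem isMonicOfDegree_drinfeld_monomial (i j : ℕ) :
    (drinfeld K (aX ^ i * aY ^ j)).IsMonicOfDegree (2 * i + 3 * j) := by
  rw [map_mul, map_pow, map_pow, drinfeld_aX, drinfeld_aY, mul_comm 2, mul_comm 3]
  exact ((isMonicOfDegree_phiX K).pow i).mul ((isMonicOfDegree_phiY K).pow j)

theorem eval_pPoly (k : ℕ) (a : A) : (pPoly K k).eval (ι a) = drinfeld K a k := by
  rw [drinfeld_apply, mul_apply, pPoly, eval_finsetSum]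
  refine Finset.sum_congr rfl fun j _ => ?_
  rw [mul_const_apply, expSeries_apply, logSeries_apply, eval_mul, eval_C, eval_pow, eval_X,
    mul_right_comm]

theorem eval_pPoly_add (k : ℕ) (a b : A) :
    (pPoly K k).eval (ι (a + b)) = (pPoly K k).eval (ι a) + (pPoly K k).eval (ι b) := by
  simp only [pPoly, eval_finsetSum, eval_mul, eval_C, eval_pow, eval_X, map_add,
    add_pow_char_pow, mul_add, Finset.sum_add_distrib]

theorem eval_pPoly_sum (k : ℕ) (s : Finset A) :
    (pPoly K k).eval (ι (s.sum id)) = ∑ m ∈ s, (pPoly K k).eval (ι m) :=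
  map_sum (AddMonoidHom.mk' (fun a => (pPoly K k).eval (ι a)) (eval_pPoly_add K k)) id s

theorem eval_pPoly_eq_zero_of_mem_monoSet {k : ℕ} {m : A} (hm : m ∈ monoSet k) :
    (pPoly K k).eval (ι m) = 0 := by
  simp only [monoSet, Finset.mem_image, Finset.mem_filter] at hm
  obtain ⟨⟨i, j⟩, ⟨_, hdeg⟩, rfl⟩ := hm
  rw [eval_pPoly]
  exact (isMonicOfDegree_drinfeld_monomial K i j).coeff_eq_zero k hdeg

theorem eval_pPoly_eq_zero_of_mem_Alt {k : ℕ} {a : A} (ha : a ∈ Alt k) :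
    (pPoly K k).eval (ι a) = 0 := by
  obtain ⟨s, hs, rfl⟩ := Finset.mem_image.1 ha
  rw [eval_pPoly_sum]
  exact Finset.sum_eq_zero fun m hm =>
    eval_pPoly_eq_zero_of_mem_monoSet K (Finset.mem_powerset.1 hs hm)

theorem eval_pPoly_tk {k : ℕ} (hk : k ≠ 1) : (pPoly K k).eval (ι (tk k)) = 1 := by
  obtain ⟨i, j, hj, h⟩ : ∃ i j, j < 2 ∧ 2 * i + 3 * j = k := by
    obtain ⟨m, rfl | rfl⟩ := Nat.even_or_odd' k
    exacts [⟨m, 0, by omega, by omega⟩, ⟨m - 1, 1, by omega, by omega⟩]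
  rw [tk_eq_monomial hj h, eval_pPoly, ← h]
  exact (isMonicOfDegree_drinfeld_monomial K i j).coeff_eq_one

theorem eval_pPoly_eq_one_of_mem_Alt_succ {k : ℕ} (hk : k ≠ 1) {a : A} (ha : a ∈ Alt (k + 1))
    (hna : a ∉ Alt k) : (pPoly K k).eval (ι a) = 1 := by
  obtain ⟨s, hs, rfl⟩ := Finset.mem_image.1 ha
  rw [Finset.mem_powerset] at hs
  have hts : tk k ∈ s := by
    by_contra h
    exact hna (Finset.mem_image.2
      ⟨s, Finset.mem_powerset.2 (subset_monoSet_of_subset_monoSet_succ hs h), rfl⟩)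
  have hrest : (s.erase (tk k)).sum id ∈ Alt k :=
    Finset.mem_image.2 ⟨_, Finset.mem_powerset.2 (subset_monoSet_of_subset_monoSet_succ
      ((s.erase_subset _).trans hs) (s.notMem_erase _)), rfl⟩
  rw [← Finset.add_sum_erase s id hts, eval_pPoly_add, id_eq, eval_pPoly_tk K hk,
    eval_pPoly_eq_zero_of_mem_Alt K hrest, add_zero]

theorem ePoly_map_dvd_pPoly (k : ℕ) : (ePoly k).map ι ∣ pPoly K k := by
  have hfactor (a : A) : (X + C a).map ι = X - C (ι a) := by
    rw [Polynomial.map_add, map_X, map_C, sub_eq_add_neg, ← C_neg, CharTwo.neg_eq]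
  rw [ePoly, Polynomial.map_prod, Finset.prod_congr rfl fun a _ => hfactor a]
  exact Finset.prod_dvd_of_coprime
    ((pairwise_coprime_X_sub_C (IsFractionRing.injective A K)).set_pairwise _)
    fun a ha => dvd_iff_isRoot.2 (eval_pPoly_eq_zero_of_mem_Alt K ha)

end DrinfeldModule

/-- For `k ≥ 2`: `p_k(a) = 0` for every `a ∈ A_{<k}`, and `p_k(a) = 1` for
every element of degree exactly `k` (i.e. `a ∈ A_{<k+1} \ A_{<k}`).  In
particular `e_k(w) ∣ p_k(w)` in `K[w]` and `p_k(t_k) = 1`. -/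
theorem stmt8 [IsFractionRing A K] (k : ℕ) (hk : 2 ≤ k) :
    (∀ a ∈ Alt k, (pPoly K k).eval (algebraMap A K a) = 0) ∧
    (∀ a ∈ Alt (k + 1), a ∉ Alt k → (pPoly K k).eval (algebraMap A K a) = 1) ∧
    (ePoly k).map (algebraMap A K) ∣ pPoly K k ∧
    (pPoly K k).eval (algebraMap A K (tk k)) = 1 := by
  have hk1 : k ≠ 1 := by omega
  exact ⟨fun a ha => eval_pPoly_eq_zero_of_mem_Alt K ha,
    fun a ha hna => eval_pPoly_eq_one_of_mem_Alt_succ K hk1 ha hna,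
    ePoly_map_dvd_pPoly K k, eval_pPoly_tk K hk1⟩
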